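/- For every k ∈ ℕ, D²[P_{L^k}] = D²[P_{R^k}] = 2 − (1/2)^k, where L^k and R^k denote the constant words of length k consisting of k letters L (resp. k letters R), so that h(L^k) = 2^{k+1}+1 and h(R^k) = 2^{k+2}−1. Moreover, for every word w of length k over {L,R}, D²[P_w] ≥ 2 − (1/2)^k. -/
import Mathlib


/-- The probability mass functions `P t` on ℤ, defined by
`P 1 = δ₀`, `P (2t) = P t`, `P (2t+1) d = ½ P (t+1) (d+1) + ½ P t (d-1)`. -/
noncomputable def P : ℕ → ℤ → ℝ
  | 0, _ => 0
  | 1, d => if d = 0 then 1 else 0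
  | (n+2), d =>
      if h : (n + 2) % 2 = 0 then P ((n+2)/2) d
      else (1/2) * P ((n+2)/2 + 1) (d+1) + (1/2) * P ((n+2)/2) (d-1)
  decreasing_by all_goals omega

/-- Letters of the alphabet. -/
inductive LR | L | R
deriving DecidableEq

/-- One step of the identification of words with odd integers: `L : t ↦ 2t-1`, `R : t ↦ 2t+1`. -/
def LRstep (t : ℕ) : LR → ℕ
  | LR.L => 2 * t - 1
  | LR.R => 2 * t + 1

/-- The odd integer associated to a word over `{L,R}`, starting from 3. -/
def hword (w : List LR) : ℕ := w.foldl LRstep 3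

/-- The variance `D²[p] = ∑ k² p(k)` of a mean-zero probability mass function on ℤ. -/
noncomputable def var (p : ℤ → ℝ) : ℝ := ∑' k : ℤ, (k : ℝ) ^ 2 * p k

/- ### Basic equations for `P` -/

lemma P_zero (d : ℤ) : P 0 d = 0 := by simp [P]

lemma P_one (d : ℤ) : P 1 d = if d = 0 then 1 else 0 := by simp [P]

lemma P_even (t : ℕ) (ht : 1 ≤ t) (d : ℤ) : P (2*t) d = P t d := by
  obtain ⟨s, rfl⟩ : ∃ s, t = s + 1 := ⟨t-1, by omega⟩
  rw [(by ring : 2*(s+1) = 2*s+2), P, dif_pos (by omega : (2*s+2) % 2 = 0),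
    (by omega : (2*s+2)/2 = s+1)]

lemma P_odd (t : ℕ) (ht : 1 ≤ t) (d : ℤ) :
    P (2*t+1) d = 1/2 * P (t+1) (d+1) + 1/2 * P t (d-1) := by
  obtain ⟨s, rfl⟩ : ∃ s, t = s + 1 := ⟨t-1, by omega⟩
  rw [(by ring : 2*(s+1)+1 = (2*s+1)+2), P, dif_neg (by omega : ¬((2*s+1+2) % 2 = 0)),
    (by omega : (2*s+1+2)/2 = s+1)]

lemma P_nonneg : ∀ t : ℕ, ∀ d : ℤ, 0 ≤ P t d := by
  intro t
  induction t using Nat.strong_induction_on with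
  | _ t ih =>
    intro d
    match t with
    | 0 => simp [P_zero]
    | 1 => rw [P_one]; positivity
    | (n+2) =>
      rcases Nat.even_or_odd (n+2) with ⟨s, hs⟩ | ⟨s, hs⟩
      · have hs1 : 1 ≤ s := by omega
        rw [(by omega : n + 2 = 2*s), P_even s hs1]
        exact ih s (by omega) d
      · have hs1 : 1 ≤ s := by omega
        rw [(by omega : n + 2 = 2*s+1), P_odd s hs1]
        have h1 := ih (s+1) (by omega) (d+1)
        have h2 := ih s (by omega) (d-1)
        positivity

lemma P_support : ∀ t : ℕ, ∀ d : ℤ, ((t:ℤ) < d ∨ d < -(t:ℤ)) → P t d = 0 := by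
  intro t
  induction t using Nat.strong_induction_on with
  | _ t ih =>
    intro d hd
    match t with
    | 0 => simp [P_zero]
    | 1 =>
      rw [P_one, if_neg]
      push_cast at hd; omega
    | (n+2) =>
      rcases Nat.even_or_odd (n+2) with ⟨s, hs⟩ | ⟨s, hs⟩
      · have hs1 : 1 ≤ s := by omega
        rw [(by omega : n + 2 = 2*s), P_even s hs1]
        refine ih s (by omega) d ?_
        push_cast at hd ⊢; omega
      · have hs1 : 1 ≤ s := by omega
        rw [(by omega : n + 2 = 2*s+1), P_odd s hs1,
          ih (s+1) (by omega) (d+1) (by push_cast at hd ⊢; omega),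
          ih s (by omega) (d-1) (by push_cast at hd ⊢; omega)]
        ring

/- ### Summability and basic tsum manipulations -/

lemma summable_P_mul (f : ℤ → ℝ) (t : ℕ) : Summable fun d => f d * P t d := by
  refine summable_of_ne_finset_zero (s := Finset.Icc (-(t:ℤ)) t) fun d hd => ?_
  rw [P_support t d (by simp [Finset.mem_Icc] at hd; omega), mul_zero]

lemma summable_P (t : ℕ) : Summable fun d => P t d := by
  have := summable_P_mul (fun _ => (1:ℝ)) t
  simpa using this

lemma summable_P_shift (f : ℤ → ℝ) (t : ℕ) (c : ℤ) (hc : c = 1 ∨ c = -1) :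
    Summable fun d => f d * P t (d + c) := by
  refine summable_of_ne_finset_zero (s := Finset.Icc (-(t:ℤ)-2) ((t:ℤ)+2)) fun d hd => ?_
  rw [P_support t (d+c) (by simp [Finset.mem_Icc] at hd; omega), mul_zero]

lemma tsum_P_shift (f : ℤ → ℝ) (t : ℕ) (c : ℤ) :
    ∑' d : ℤ, f d * P t (d + c) = ∑' e : ℤ, f (e - c) * P t e := by
  have h := Equiv.tsum_eq (Equiv.addRight c) (fun e : ℤ => f (e - c) * P t e)
  simp only [Equiv.coe_addRight, add_sub_cancel_right] at h
  exact h

lemma tsum_odd (f : ℤ → ℝ) (t : ℕ) (ht : 1 ≤ t) :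
    ∑' d : ℤ, f d * P (2*t+1) d
      = 1/2 * (∑' e : ℤ, f (e - 1) * P (t+1) e) + 1/2 * (∑' e : ℤ, f (e + 1) * P t e) := by
  have h1 : Summable fun d : ℤ => 1/2 * (f d * P (t+1) (d + 1)) :=
    (summable_P_shift f (t+1) 1 (Or.inl rfl)).mul_left _
  have h2 : Summable fun d : ℤ => 1/2 * (f d * P t (d + (-1))) :=
    (summable_P_shift f t (-1) (Or.inr rfl)).mul_left _
  calc ∑' d : ℤ, f d * P (2*t+1) d
      = ∑' d : ℤ, (1/2 * (f d * P (t+1) (d+1)) + 1/2 * (f d * P t (d + (-1)))) := by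
        refine tsum_congr fun d => ?_
        rw [P_odd t ht d, (by ring : d + (-1) = d - 1)]; ring
    _ = 1/2 * (∑' d : ℤ, f d * P (t+1) (d+1)) + 1/2 * (∑' d : ℤ, f d * P t (d + (-1))) := by
        rw [Summable.tsum_add h1 h2, tsum_mul_left, tsum_mul_left]
    _ = _ := by
        rw [tsum_P_shift f (t+1) 1, tsum_P_shift f t (-1)]
        simp [sub_neg_eq_add]

lemma tsum_quad (t : ℕ) (c : ℝ) :
    ∑' e : ℤ, ((e:ℝ) + c)^2 * P t e
      = var (P t) + 2*c * (∑' e : ℤ, (e:ℝ) * P t e) + c^2 * (∑' e : ℤ, P t e) := by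
  have hsq : Summable fun e : ℤ => (e:ℝ)^2 * P t e := summable_P_mul _ t
  have hm : Summable fun e : ℤ => (2*c) * ((e:ℝ) * P t e) :=
    (summable_P_mul (fun e : ℤ => (e:ℝ)) t).mul_left _
  have hP : Summable fun e : ℤ => c^2 * P t e := (summable_P t).mul_left _
  calc ∑' e : ℤ, ((e:ℝ) + c)^2 * P t e
      = ∑' e : ℤ, ((e:ℝ)^2 * P t e + ((2*c) * ((e:ℝ) * P t e) + c^2 * P t e)) := by
        refine tsum_congr fun e => ?_; ring
    _ = _ := by
        rw [Summable.tsum_add hsq (hm.add hP), Summable.tsum_add hm hP, tsum_mul_left, tsum_mul_left, var]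
        ring

lemma tsum_lin (t : ℕ) (c : ℝ) :
    ∑' e : ℤ, ((e:ℝ) + c) * P t e
      = (∑' e : ℤ, (e:ℝ) * P t e) + c * (∑' e : ℤ, P t e) := by
  have hm : Summable fun e : ℤ => (e:ℝ) * P t e := summable_P_mul _ t
  have hP : Summable fun e : ℤ => c * P t e := (summable_P t).mul_left _
  calc ∑' e : ℤ, ((e:ℝ) + c) * P t e
      = ∑' e : ℤ, ((e:ℝ) * P t e + c * P t e) := by
        refine tsum_congr fun e => ?_; ring
    _ = _ := by rw [Summable.tsum_add hm hP, tsum_mul_left]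

/- ### Total mass 1 and mean 0 -/

lemma P_total_mean : ∀ t : ℕ, 1 ≤ t →
    (∑' d : ℤ, P t d) = 1 ∧ (∑' d : ℤ, (d:ℝ) * P t d) = 0 := by
  intro t
  induction t using Nat.strong_induction_on with
  | _ t ih =>
    intro ht
    match t, ht with
    | 1, _ =>
      constructor
      · rw [tsum_eq_sum (s := {0}) (fun d hd => by
          rw [P_one, if_neg (by simpa using hd)])]
        simp [P_one]
      · rw [tsum_eq_sum (s := {0}) (fun d hd => by
          rw [P_one, if_neg (by simpa using hd), mul_zero])]
        simp
    | (n+2), _ =>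
      rcases Nat.even_or_odd (n+2) with ⟨s, hs⟩ | ⟨s, hs⟩
      · have hs1 : 1 ≤ s := by omega
        obtain ⟨hT, hM⟩ := ih s (by omega) hs1
        rw [(by omega : n + 2 = 2*s)]
        constructor
        · rw [tsum_congr (P_even s hs1), hT]
        · rw [tsum_congr (fun d => by rw [P_even s hs1 d]), hM]
      · have hs1 : 1 ≤ s := by omega
        obtain ⟨hT, hM⟩ := ih s (by omega) hs1
        obtain ⟨hT', hM'⟩ := ih (s+1) (by omega) (by omega)
        rw [(by omega : n + 2 = 2*s+1)]
        constructor
        · have h := tsum_odd (fun _ => (1:ℝ)) s hs1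
          simp only [one_mul] at h
          rw [h, hT, hT']; norm_num
        · have h := tsum_odd (fun d : ℤ => (d:ℝ)) s hs1
          simp only [Int.cast_sub, Int.cast_add, Int.cast_one] at h
          have e1 : ∑' e : ℤ, ((e:ℝ) - 1) * P (s+1) e = -1 := by
            have := tsum_lin (s+1) (-1)
            simp only [(by intro e; ring_nf : ∀ e : ℤ, ((e:ℝ) + (-1)) = (e:ℝ) - 1)] at this
            rw [this, hM', hT']; ring
          have e2 : ∑' e : ℤ, ((e:ℝ) + 1) * P s e = 1 := by
            rw [tsum_lin s 1, hM, hT]; ring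
          rw [h, e1, e2]; ring

/- ### Variance recursion -/

lemma var_nonneg (t : ℕ) : 0 ≤ var (P t) :=
  tsum_nonneg fun d => mul_nonneg (sq_nonneg _) (P_nonneg t d)

lemma var_one : var (P 1) = 0 := by
  rw [var, tsum_eq_sum (s := {0}) (fun d hd => by
    rw [P_one, if_neg (by simpa using hd), mul_zero])]
  simp

lemma var_even (t : ℕ) (ht : 1 ≤ t) : var (P (2*t)) = var (P t) := by
  rw [var, var]
  exact tsum_congr fun d => by rw [P_even t ht d]

lemma var_odd (t : ℕ) (ht : 1 ≤ t) :
    var (P (2*t+1)) = 1 + (var (P (t+1)) + var (P t)) / 2 := by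
  obtain ⟨hT, hM⟩ := P_total_mean t ht
  obtain ⟨hT', hM'⟩ := P_total_mean (t+1) (by omega)
  rw [var]
  have h := tsum_odd (fun d : ℤ => (d:ℝ)^2) (t := t) ht
  simp only [Int.cast_sub, Int.cast_add, Int.cast_one] at h
  have e1 : ∑' e : ℤ, ((e:ℝ) - 1)^2 * P (t+1) e = var (P (t+1)) + 1 := by
    have := tsum_quad (t+1) (-1)
    simp only [(by intro e; ring_nf : ∀ e : ℤ, ((e:ℝ) + (-1)) = (e:ℝ) - 1)] at this
    rw [this, hM', hT']; ring
  have e2 : ∑' e : ℤ, ((e:ℝ) + 1)^2 * P t e = var (P t) + 1 := by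
    rw [tsum_quad t 1, hM, hT]; ring
  rw [h, e1, e2]; ring

/- ### Values on powers of two and the extremal words -/

lemma var_pow2 : ∀ k : ℕ, var (P (2^k)) = 0 := by
  intro k
  induction k with
  | zero => simpa using var_one
  | succ k ih =>
    rw [(by ring : (2:ℕ)^(k+1) = 2 * 2^k), var_even (2^k) Nat.one_le_two_pow, ih]

lemma var_three : var (P 3) = 1 := by
  have h := var_odd 1 le_rfl
  norm_num at h
  have h2 : var (P 2) = 0 := by simpa using var_pow2 1
  rw [h, h2, var_one]; norm_num

lemma var_L : ∀ k : ℕ, var (P (2^(k+1)+1)) = 2 - (1/2:ℝ)^k := by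
  intro k
  induction k with
  | zero =>
    rw [(by norm_num : (2:ℕ)^(0+1)+1 = 3), var_three]; norm_num
  | succ k ih =>
    have h := var_odd (2^(k+1)) Nat.one_le_two_pow
    rw [(by ring : 2 * 2^(k+1) + 1 = 2^(k+1+1)+1)] at h
    rw [h, ih, var_pow2 (k+1), pow_succ]
    ring

lemma var_R : ∀ k : ℕ, var (P (2^(k+2)-1)) = 2 - (1/2:ℝ)^k := by
  intro k
  induction k with
  | zero =>
    rw [(by norm_num : (2:ℕ)^(0+2)-1 = 3), var_three]; norm_num
  | succ k ih =>
    have hp : 1 < (2:ℕ)^(k+2) := Nat.one_lt_two_pow_iff.mpr (by omega)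
    have h := var_odd (2^(k+2)-1) (by omega)
    have hpe : (2:ℕ)^(k+1+2) = 2 * 2^(k+2) := by ring
    rw [(by omega : 2 * (2^(k+2)-1) + 1 = 2^(k+1+2)-1)] at h
    rw [h, (by omega : 2^(k+2)-1+1 = 2^(k+2)), var_pow2 (k+2), ih, pow_succ]
    ring

/- ### The lower bound for all odd numbers in a dyadic interval -/

lemma var_lower : ∀ k : ℕ, ∀ t : ℕ, Odd t → 2^(k+1) < t → t < 2^(k+2) →
    2 - (1/2:ℝ)^k ≤ var (P t) := by
  intro k
  induction k with
  | zero =>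
    intro t h1 h2 h3
    obtain ⟨m, rfl⟩ := h1
    norm_num at h2 h3
    have : m = 1 := by omega
    subst this
    rw [(by norm_num : 2*1+1 = 3), var_three]
    norm_num
  | succ k ih =>
    intro t h1 h2 h3
    obtain ⟨s, rfl⟩ := h1
    have p1 : (2:ℕ)^(k+1+1) = 2 * 2^(k+1) := by ring
    have p2 : (2:ℕ)^(k+1+2) = 2 * 2^(k+2) := by ring
    have p3 : (2:ℕ)^(k+2) = 2 * 2^(k+1) := by ring
    have hp : 1 ≤ (2:ℕ)^(k+1) := Nat.one_le_two_pow
    have hs1 : 1 ≤ s := by omega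
    rw [var_odd s hs1]
    have hhalf : (1/2:ℝ)^(k+1) = (1/2:ℝ)^k / 2 := by rw [pow_succ]; ring
    rcases Nat.even_or_odd s with ⟨m, hm⟩ | ho
    · have hodd : Odd (s+1) := ⟨m, by omega⟩
      have hb1 : 2^(k+1) < s + 1 := by omega
      have hb2 : s + 1 < 2^(k+2) := by omega
      have hv := ih (s+1) hodd hb1 hb2
      have h0 := var_nonneg s
      rw [hhalf]; linarith
    · obtain ⟨m, hm⟩ := ho
      have hb1 : 2^(k+1) < s := by omega
      have hb2 : s < 2^(k+2) := by omega
      have hv := ih s ⟨m, hm⟩ hb1 hb2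
      have h0 := var_nonneg (s+1)
      rw [hhalf]; linarith

/- ### Word combinatorics -/

lemma foldl_bounds : ∀ (w : List LR) (t m : ℕ), Odd t → 2^(m+1) < t → t < 2^(m+2) →
    Odd (w.foldl LRstep t) ∧ 2^(m + w.length + 1) < w.foldl LRstep t ∧
      w.foldl LRstep t < 2^(m + w.length + 2) := by
  intro w
  induction w with
  | nil => intro t m h1 h2 h3; simpa using ⟨h1, h2, h3⟩
  | cons a w ih =>
    intro t m h1 h2 h3
    have p1 : (2:ℕ)^(m+1+1) = 2 * 2^(m+1) := by ring
    have p2 : (2:ℕ)^(m+1+2) = 2 * 2^(m+1+1) := by ring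
    have p3 : (2:ℕ)^(m+2) = 2 * 2^(m+1) := by ring
    have hp : 1 ≤ (2:ℕ)^(m+1) := Nat.one_le_two_pow
    obtain ⟨j, hj⟩ := h1
    have key : Odd (LRstep t a) ∧ 2^(m+1+1) < LRstep t a ∧ LRstep t a < 2^(m+1+2) := by
      cases a with
      | L =>
        have hL : LRstep t LR.L = 2*t-1 := rfl
        exact ⟨⟨2*j, by rw [hL]; omega⟩, by rw [hL]; omega, by rw [hL]; omega⟩
      | R =>
        have hR : LRstep t LR.R = 2*t+1 := rfl
        exact ⟨⟨2*j+1, by rw [hR]; omega⟩, by rw [hR]; omega, by rw [hR]; omega⟩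
    have hres := ih (LRstep t a) (m+1) key.1 key.2.1 key.2.2
    have hstep : (a :: w).foldl LRstep t = w.foldl LRstep (LRstep t a) := rfl
    have e1 : m + (a :: w).length + 1 = (m+1) + w.length + 1 := by simp; omega
    have e2 : m + (a :: w).length + 2 = (m+1) + w.length + 2 := by simp; omega
    rw [hstep, e1, e2]
    exact hres

lemma hword_bounds (w : List LR) :
    Odd (hword w) ∧ 2^(w.length+1) < hword w ∧ hword w < 2^(w.length+2) := by
  have h := foldl_bounds w 3 0 (by decide) (by norm_num) (by norm_num)
  simpa [hword] using h

lemma hword_L : ∀ k : ℕ, hword (List.replicate k LR.L) = 2^(k+1)+1 := by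
  intro k
  induction k with
  | zero => simp [hword]
  | succ k ih =>
    rw [List.replicate_succ']
    have : hword (List.replicate k LR.L ++ [LR.L])
        = LRstep (hword (List.replicate k LR.L)) LR.L := by
      simp [hword, List.foldl_append]
    rw [this, ih]
    have hp : 1 ≤ (2:ℕ)^(k+1) := Nat.one_le_two_pow
    have p1 : (2:ℕ)^(k+1+1) = 2 * 2^(k+1) := by ring
    have hL : LRstep (2^(k+1)+1) LR.L = 2*(2^(k+1)+1)-1 := rfl
    rw [hL]; omega

lemma hword_R : ∀ k : ℕ, hword (List.replicate k LR.R) = 2^(k+2)-1 := by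
  intro k
  induction k with
  | zero => simp [hword]
  | succ k ih =>
    rw [List.replicate_succ']
    have : hword (List.replicate k LR.R ++ [LR.R])
        = LRstep (hword (List.replicate k LR.R)) LR.R := by
      simp [hword, List.foldl_append]
    rw [this, ih]
    have hp : 1 ≤ (2:ℕ)^(k+2) := Nat.one_le_two_pow
    have p1 : (2:ℕ)^(k+1+2) = 2 * 2^(k+2) := by ring
    have hR : LRstep (2^(k+2)-1) LR.R = 2*(2^(k+2)-1)+1 := rfl
    rw [hR]; omega

/-- The constant words `L^k` and `R^k` satisfy `h(L^k) = 2^(k+1) + 1`,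
`h(R^k) = 2^(k+2) - 1`, and `D²[P_{L^k}] = D²[P_{R^k}] = 2 - (1/2)^k`; moreover they
minimize the variance among all words of length `k`. -/
theorem variance_constant_words (k : ℕ) :
    hword (List.replicate k LR.L) = 2 ^ (k + 1) + 1 ∧
    hword (List.replicate k LR.R) = 2 ^ (k + 2) - 1 ∧
    var (P (hword (List.replicate k LR.L))) = 2 - (1/2 : ℝ) ^ k ∧
    var (P (hword (List.replicate k LR.R))) = 2 - (1/2 : ℝ) ^ k ∧
    (∀ w : List LR, w.length = k → 2 - (1/2 : ℝ) ^ k ≤ var (P (hword w))) := by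
  refine ⟨hword_L k, hword_R k, ?_, ?_, ?_⟩
  · rw [hword_L k]; exact var_L k
  · rw [hword_R k]; exact var_R k
  · intro w hw
    obtain ⟨h1, h2, h3⟩ := hword_bounds w
    rw [hw] at h2 h3
    exact var_lower k (hword w) h1 h2 h3
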